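/- arXiv:2201.12865 — 4 statements merged into one kernel-verified Lean document; each statement's English description precedes it below -/
import Mathlib

section
/- Let 𝒳 ⊆ ℝ^p be compact, let L_ξ, L_c, L_α ≥ 0, and let ξ : 𝒳 → ℝ, c : 𝒳 → (0,∞) and α : 𝒳 × [1,∞) → ℝ satisfy: ξ(x) > 0 for all x ∈ 𝒳; for each x the map t ↦ α_x(t)/t is integrable on [1,T] for every T ≥ 1 and α_x(t) → 0 as t → ∞; and for all x, y ∈ 𝒳: |ξ(x) − ξ(y)| ≤ L_ξ‖x − y‖₂, |log c(x) − log c(y)| ≤ L_c‖x − y‖₂, sup_{t ≥ 1} |α_x(t) − α_y(t)| ≤ L_α‖x − y‖₂. Define Q_x(T) = T^{ξ(x)} · c(x) · exp(∫_1^T α_x(t)/t dt). Then inf_{x ∈ 𝒳} Q_x(T) → ∞ as T → ∞. -/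
open MeasureTheory Real Filter Topology Set

/-!
Write `Q_x(T) = exp (ξ(x) log T + log c(x) + ∫₁ᵀ α_x(t)/t dt)`. On the compact set the Lipschitz
functions `ξ` and `log c` are bounded below, by `ξ₀ > 0` and `ℓ`. The family `x ↦ α_x(t)` is
equi-Lipschitz, so its pointwise convergence to `0` is uniform on the compact set (Ascoli); hence
`|α_x| ≤ ξ₀/2` on some `[t₀, ∞)` for all `x`, and the integral over `[t₀, T]` is at least
`-(ξ₀/2) log (T/t₀)`. The integral over `[1, t₀]` is Lipschitz in `x`, hence bounded below. So the
exponent is at least `(ξ₀/2) log T - const`, uniformly in `x`.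
-/

theorem EquicontinuousOn.tendstoUniformlyOn_of_tendsto {ι X α : Type*} [TopologicalSpace X]
    [UniformSpace α] {F : ι → X → α} {f : X → α} {l : Filter ι} {s : Set X}
    (hs : IsCompact s) (hF : EquicontinuousOn F s) (hf : ∀ x ∈ s, Tendsto (F · x) l (𝓝 (f x))) :
    TendstoUniformlyOn F f l s := by
  have h := (EquicontinuousOn.tendsto_uniformOnFun_iff_pi' (𝔖 := {s}) (by simpa using hs)
    (by simpa using hF) l f).2 <| by simpa [tendsto_pi_nhds] using hf
  exact UniformOnFun.tendsto_iff_tendstoUniformlyOn.1 h s rfl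

theorem LipschitzOnWith.of_abs_sub_le_mul_norm {E : Type*} [SeminormedAddCommGroup E]
    {f : E → ℝ} {s : Set E} {L : ℝ} (h : ∀ x ∈ s, ∀ y ∈ s, |f x - f y| ≤ L * ‖x - y‖) :
    LipschitzOnWith L.toNNReal f s :=
  LipschitzOnWith.of_dist_le_mul fun x hx y hy => by
    rw [dist_eq_norm x y, Real.dist_eq]
    exact (h x hx y hy).trans (mul_le_mul_of_nonneg_right (le_coe_toNNReal L) (norm_nonneg _))

theorem abs_integral_div_self_le {f : ℝ → ℝ} {a b δ : ℝ} (ha : 0 < a) (hab : a ≤ b)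
    (hf : ∀ t ∈ Icc a b, |f t| ≤ δ) : |∫ t in a..b, f t / t| ≤ δ * log (b / a) := by
  have h0 : (0 : ℝ) ∉ uIcc a b := by
    rw [uIcc_of_le hab]; exact fun h => ha.not_ge h.1
  calc |∫ t in a..b, f t / t| ≤ ∫ t in a..b, δ * t⁻¹ := by
        refine intervalIntegral.norm_integral_le_of_norm_le (f := fun t => f t / t) hab
          (ae_of_all _ fun t ht => ?_) ((intervalIntegrable_inv_iff.2 (Or.inr h0)).const_mul δ)
        have ht0 : 0 < t := ha.trans ht.1
        rw [Real.norm_eq_abs, abs_div, abs_of_pos ht0, div_eq_mul_inv]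
        exact mul_le_mul_of_nonneg_right (hf t (Ioc_subset_Icc_self ht)) (inv_nonneg.2 ht0.le)
    _ = δ * log (b / a) := by rw [intervalIntegral.integral_const_mul, integral_inv h0]

theorem rpow_mul_mul_exp_eq_exp {T ξ c I : ℝ} (hT : 0 < T) (hc : 0 < c) :
    T ^ ξ * c * exp I = exp (ξ * log T + log c + I) := by
  rw [exp_add, exp_add, exp_log hc, rpow_def_of_pos hT, mul_comm (log T)]

section KaramataIntegral

variable {E : Type*} [SeminormedAddCommGroup E] {s : Set E} {α : E → ℝ → ℝ} {L : ℝ}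

theorem tendstoUniformlyOn_of_abs_sub_le (hs : IsCompact s)
    (hα : ∀ x ∈ s, ∀ y ∈ s, ∀ t : ℝ, 1 ≤ t → |α x t - α y t| ≤ L * ‖x - y‖)
    (hlim : ∀ x ∈ s, Tendsto (α x) atTop (𝓝 0)) :
    TendstoUniformlyOn (fun t x => α x t) 0 atTop s := by
  -- Clamping `t` at `1` makes every member of the family Lipschitz, not just those with `t ≥ 1`.
  have hF : EquicontinuousOn (fun t x => α x (max t 1)) s :=
    (LipschitzOnWith.uniformEquicontinuousOn (fun t x => α x (max t 1)) L.toNNReal fun t =>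
      LipschitzOnWith.of_abs_sub_le_mul_norm fun x hx y hy =>
        hα x hx y hy _ (le_max_right t 1)).equicontinuousOn
  refine (hF.tendstoUniformlyOn_of_tendsto hs fun x hx => ?_).congr ?_
  · exact (hlim x hx).comp (tendsto_atTop_mono (le_max_left · 1) tendsto_id)
  · filter_upwards [eventually_ge_atTop 1] with t ht x _
    simp only [max_eq_left ht]

theorem bddBelow_integral_div_self (hs : IsCompact s)
    (hint : ∀ x ∈ s, ∀ T : ℝ, 1 ≤ T → IntervalIntegrable (fun t => α x t / t) volume 1 T)
    (hα : ∀ x ∈ s, ∀ y ∈ s, ∀ t : ℝ, 1 ≤ t → |α x t - α y t| ≤ L * ‖x - y‖)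
    {b : ℝ} (hb : 1 ≤ b) :
    BddBelow ((fun x => ∫ t in (1 : ℝ)..b, α x t / t) '' s) := by
  refine hs.bddBelow_image (LipschitzOnWith.of_abs_sub_le_mul_norm (L := L * log b)
    fun x hx y hy => ?_).continuousOn
  rw [← intervalIntegral.integral_sub (hint x hx b hb) (hint y hy b hb)]
  simp_rw [← sub_div]
  calc _ ≤ L * ‖x - y‖ * log (b / 1) :=
        abs_integral_div_self_le one_pos hb fun t ht => hα x hx y hy t ht.1
    _ = L * log b * ‖x - y‖ := by rw [div_one]; ring

theorem exists_forall_le_integral_div_self (hs : IsCompact s)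
    (hint : ∀ x ∈ s, ∀ T : ℝ, 1 ≤ T → IntervalIntegrable (fun t => α x t / t) volume 1 T)
    (hα : ∀ x ∈ s, ∀ y ∈ s, ∀ t : ℝ, 1 ≤ t → |α x t - α y t| ≤ L * ‖x - y‖)
    (hlim : ∀ x ∈ s, Tendsto (α x) atTop (𝓝 0)) {a : ℝ} (ha : 0 < a) :
    ∃ K t₀ : ℝ, 1 ≤ t₀ ∧ ∀ x ∈ s, ∀ T : ℝ, t₀ ≤ T →
      K - a * log T ≤ ∫ t in (1 : ℝ)..T, α x t / t := by
  obtain ⟨t₁, hsmall⟩ := eventually_atTop.1 <|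
    Metric.tendstoUniformlyOn_iff.1 (tendstoUniformlyOn_of_abs_sub_le hs hα hlim) a ha
  set t₀ := max t₁ 1
  have ht₀ : 1 ≤ t₀ := le_max_right _ _
  obtain ⟨B, hB⟩ := bddBelow_integral_div_self hs hint hα ht₀
  refine ⟨B + a * log t₀, t₀, ht₀, fun x hx T ht₀T => ?_⟩
  have hT : 1 ≤ T := ht₀.trans ht₀T
  have htail : |∫ t in t₀..T, α x t / t| ≤ a * log (T / t₀) :=
    abs_integral_div_self_le (by positivity) ht₀T fun t ht => by
      simpa using (hsmall t ((le_max_left _ _).trans ht.1) x hx).le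
  rw [← intervalIntegral.integral_add_adjacent_intervals (hint x hx t₀ ht₀)
    ((hint x hx T hT).mono_set (uIcc_subset_uIcc (mem_uIcc_of_le ht₀ ht₀T) right_mem_uIcc))]
  rw [log_div (by positivity) (by positivity)] at htail
  linarith [hB ⟨x, hx, rfl⟩, neg_abs_le (∫ t in t₀..T, α x t / t)]

end KaramataIntegral

theorem quantile_uniformly_unbounded_general {p : ℕ}
    (𝒳 : Set (EuclideanSpace ℝ (Fin p))) (hcomp : IsCompact 𝒳)
    (Lξ Lc Lα : ℝ)
    (ξ : EuclideanSpace ℝ (Fin p) → ℝ)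
    (c : EuclideanSpace ℝ (Fin p) → ℝ)
    (α : EuclideanSpace ℝ (Fin p) → ℝ → ℝ)
    (hξpos : ∀ x ∈ 𝒳, 0 < ξ x)
    (hc : ∀ x ∈ 𝒳, 0 < c x)
    (hint : ∀ x ∈ 𝒳, ∀ T : ℝ, 1 ≤ T →
      IntervalIntegrable (fun t => α x t / t) volume 1 T)
    (hαlim : ∀ x ∈ 𝒳, Filter.Tendsto (fun t => α x t) Filter.atTop (nhds 0))
    (hξ : ∀ x ∈ 𝒳, ∀ y ∈ 𝒳, |ξ x - ξ y| ≤ Lξ * ‖x - y‖)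
    (hlogc : ∀ x ∈ 𝒳, ∀ y ∈ 𝒳, |Real.log (c x) - Real.log (c y)| ≤ Lc * ‖x - y‖)
    (hα : ∀ x ∈ 𝒳, ∀ y ∈ 𝒳, ∀ t : ℝ, 1 ≤ t → |α x t - α y t| ≤ Lα * ‖x - y‖)
    (Q : EuclideanSpace ℝ (Fin p) → ℝ → ℝ)
    (hQ : ∀ x ∈ 𝒳, ∀ T : ℝ, 1 ≤ T →
      Q x T = T ^ (ξ x) * c x * Real.exp (∫ t in (1:ℝ)..T, α x t / t)) :
    ∀ M : ℝ, ∃ T₀ : ℝ, ∀ T : ℝ, T₀ ≤ T → ∀ x ∈ 𝒳, M ≤ Q x T := by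
  intro M
  rcases 𝒳.eq_empty_or_nonempty with rfl | hne
  · exact ⟨0, fun _ _ x hx => absurd hx (notMem_empty x)⟩
  obtain ⟨x₀, hx₀, hξmin⟩ :=
    hcomp.exists_isMinOn hne (LipschitzOnWith.of_abs_sub_le_mul_norm hξ).continuousOn
  obtain ⟨ℓ, hℓ⟩ := hcomp.bddBelow_image (LipschitzOnWith.of_abs_sub_le_mul_norm hlogc).continuousOn
  obtain ⟨K, t₀, ht₀, hI⟩ :=
    exists_forall_le_integral_div_self hcomp hint hα hαlim (half_pos (hξpos x₀ hx₀))
  have hlim : Tendsto (fun T => exp (ξ x₀ / 2 * log T + (ℓ + K))) atTop atTop :=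
    tendsto_exp_atTop.comp <| tendsto_atTop_add_const_right _ _ <|
      tendsto_log_atTop.const_mul_atTop (half_pos (hξpos x₀ hx₀))
  obtain ⟨T₁, hT₁⟩ := eventually_atTop.1 (hlim.eventually_ge_atTop M)
  refine ⟨max T₁ t₀, fun T hT x hx => ?_⟩
  have hT1 : 1 ≤ T := ht₀.trans (le_of_max_le_right hT)
  rw [hQ x hx T hT1, rpow_mul_mul_exp_eq_exp (by positivity) (hc x hx)]
  refine (hT₁ T (le_of_max_le_left hT)).trans (exp_le_exp.2 ?_)
  have hξT := mul_le_mul_of_nonneg_right (hξmin hx) (log_nonneg hT1)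
  linarith [hℓ ⟨x, hx, rfl⟩, hI x hx T (le_of_max_le_right hT)]

/-- Uniform divergence of the conditional quantile function over a compact
predictor space: `inf_{x ∈ 𝒳} Q_x(T) → ∞` as `T → ∞`. -/
theorem quantile_uniformly_unbounded {p : ℕ}
    (𝒳 : Set (EuclideanSpace ℝ (Fin p))) (hcomp : IsCompact 𝒳)
    (Lξ Lc Lα : ℝ) (hLξ : 0 ≤ Lξ) (hLc : 0 ≤ Lc) (hLα : 0 ≤ Lα)
    (ξ : EuclideanSpace ℝ (Fin p) → ℝ)
    (c : EuclideanSpace ℝ (Fin p) → ℝ)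
    (α : EuclideanSpace ℝ (Fin p) → ℝ → ℝ)
    (hξpos : ∀ x ∈ 𝒳, 0 < ξ x)
    (hc : ∀ x ∈ 𝒳, 0 < c x)
    (hint : ∀ x ∈ 𝒳, ∀ T : ℝ, 1 ≤ T →
      IntervalIntegrable (fun t => α x t / t) volume 1 T)
    (hαlim : ∀ x ∈ 𝒳, Filter.Tendsto (fun t => α x t) Filter.atTop (nhds 0))
    (hξ : ∀ x ∈ 𝒳, ∀ y ∈ 𝒳, |ξ x - ξ y| ≤ Lξ * ‖x - y‖)
    (hlogc : ∀ x ∈ 𝒳, ∀ y ∈ 𝒳, |Real.log (c x) - Real.log (c y)| ≤ Lc * ‖x - y‖)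
    (hα : ∀ x ∈ 𝒳, ∀ y ∈ 𝒳, ∀ t : ℝ, 1 ≤ t → |α x t - α y t| ≤ Lα * ‖x - y‖)
    (Q : EuclideanSpace ℝ (Fin p) → ℝ → ℝ)
    (hQ : ∀ x ∈ 𝒳, ∀ T : ℝ, 1 ≤ T →
      Q x T = T ^ (ξ x) * c x * Real.exp (∫ t in (1:ℝ)..T, α x t / t)) :
    ∀ M : ℝ, ∃ T₀ : ℝ, ∀ T : ℝ, T₀ ≤ T → ∀ x ∈ 𝒳, M ≤ Q x T :=
  quantile_uniformly_unbounded_general 𝒳 hcomp Lξ Lc Lα ξ c α hξpos hc hint hαlim hξ hlogc hα Q hQ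
end

section
/- Let η ∈ (0,1) and let y, q̂_x, q̂_i, q_x, q_i be real numbers with q_x > 1, q_i > 1, q̂_x > 0, q̂_i > 0, |q̂_x/q_x − 1| < η, |q̂_i/q_i − 1| < η, and y > q̂_i. Let D ≥ 0 satisfy |log(q_x) − log(q_i)| ≤ D. Then |log(1 + (y − q̂_i)/q̂_x) − log(y/q_x)| ≤ D + log((1+η)/(1−η)²). -/
open Real

set_option maxHeartbeats 1000000 in
/-- Deterministic logarithm bound comparing the localized GPD likelihood
term `log(1 + (y − q̂_i)/q̂_x)` with its population counterpart `log(y/q_x)`. -/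
theorem logarithm_bound
    (η y qhx qhi qx qi D : ℝ)
    (hη0 : 0 < η) (hη1 : η < 1)
    (hqx : 1 < qx) (hqi : 1 < qi)
    (hqhx : 0 < qhx) (hqhi : 0 < qhi)
    (hx : |qhx / qx - 1| < η) (hi : |qhi / qi - 1| < η)
    (hy : qhi < y)
    (hD : 0 ≤ D)
    (hlog : |Real.log qx - Real.log qi| ≤ D) :
    |Real.log (1 + (y - qhi) / qhx) - Real.log (y / qx)| ≤
      D + Real.log ((1 + η) / (1 - η) ^ 2) := by
  have hm : (0:ℝ) < 1 - η := by linarith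
  have hp : (0:ℝ) < 1 + η := by linarith
  have hqx0 : (0:ℝ) < qx := by linarith
  have hqi0 : (0:ℝ) < qi := by linarith
  have hy0 : (0:ℝ) < y := lt_trans hqhi hy
  obtain ⟨hx1, hx2⟩ := abs_lt.mp hx
  obtain ⟨hi1, hi2⟩ := abs_lt.mp hi
  have hxl : (1 - η) * qx < qhx := by
    have h := (lt_div_iff₀ hqx0).mp (show 1 - η < qhx / qx by linarith)
    linarith
  have hxu : qhx < (1 + η) * qx := by
    have h := (div_lt_iff₀ hqx0).mp (show qhx / qx < 1 + η by linarith)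
    linarith
  have hil : (1 - η) * qi < qhi := by
    have h := (lt_div_iff₀ hqi0).mp (show 1 - η < qhi / qi by linarith)
    linarith
  have hiu : qhi < (1 + η) * qi := by
    have h := (div_lt_iff₀ hqi0).mp (show qhi / qi < 1 + η by linarith)
    linarith
  have hT0 : (0:ℝ) < qhx + y - qhi := by linarith
  obtain ⟨hD1, hD2⟩ := abs_le.mp hlog
  -- rewrite the difference
  have hrw : Real.log (1 + (y - qhi) / qhx) - Real.log (y / qx)
      = (Real.log (qhx + y - qhi) - Real.log y) + (Real.log qx - Real.log qhx) := by
    have h1 : 1 + (y - qhi) / qhx = (qhx + y - qhi) / qhx := by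
      field_simp
      ring
    rw [h1, Real.log_div hT0.ne' hqhx.ne', Real.log_div hy0.ne' hqx0.ne']
    ring
  rw [hrw]
  -- bound on L1
  have hlogpm : Real.log (1 - η) ≤ Real.log (1 + η) := by
    apply Real.log_le_log hm; linarith
  have hL1u : Real.log (qhx + y - qhi) - Real.log y
      ≤ D + (Real.log (1 + η) - Real.log (1 - η)) := by
    by_cases h : qhx ≤ qhi
    · have : Real.log (qhx + y - qhi) ≤ Real.log y := by
        apply Real.log_le_log hT0; linarith
      linarith
    · push_neg at h
      have hle : qhx + y - qhi ≤ ((1 + η) * qx / ((1 - η) * qi)) * y := by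
        rw [div_mul_eq_mul_div, le_div_iff₀ (by positivity)]
        nlinarith [mul_pos hy0 hqx0, mul_nonneg (le_of_lt (sub_pos.mpr h)) (le_of_lt (sub_pos.mpr hy))]
      have := Real.log_le_log hT0 hle
      rw [Real.log_mul (by positivity) hy0.ne', Real.log_div (by positivity) (by positivity),
        Real.log_mul hp.ne' hqx0.ne', Real.log_mul hm.ne' hqi0.ne'] at this
      linarith
  have hL1l : -(D + (Real.log (1 + η) - Real.log (1 - η)))
      ≤ Real.log (qhx + y - qhi) - Real.log y := by
    by_cases h : qhi ≤ qhx
    · have : Real.log y ≤ Real.log (qhx + y - qhi) := by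
        apply Real.log_le_log hy0; linarith
      linarith
    · push_neg at h
      have hle : ((1 - η) * qx / ((1 + η) * qi)) * y ≤ qhx + y - qhi := by
        rw [div_mul_eq_mul_div, div_le_iff₀ (by positivity)]
        nlinarith [mul_nonneg (le_of_lt (sub_pos.mpr h)) (le_of_lt (sub_pos.mpr hy))]
      have := Real.log_le_log (by positivity) hle
      rw [Real.log_mul (by positivity) hy0.ne', Real.log_div (by positivity) (by positivity),
        Real.log_mul hm.ne' hqx0.ne', Real.log_mul hp.ne' hqi0.ne'] at this
      linarith
  -- bound on L2
  have hsq : Real.log (1 + η) + Real.log (1 - η) ≤ 0 := by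
    rw [← Real.log_mul hp.ne' hm.ne']
    apply Real.log_nonpos (by positivity) (by nlinarith)
  have hL2u : Real.log qx - Real.log qhx ≤ -Real.log (1 - η) := by
    have : Real.log ((1 - η) * qx) ≤ Real.log qhx :=
      Real.log_le_log (by positivity) hxl.le
    rw [Real.log_mul hm.ne' hqx0.ne'] at this
    linarith only [this, hsq, hlogpm]
  have hL2l : Real.log (1 - η) ≤ Real.log qx - Real.log qhx := by
    have : Real.log qhx ≤ Real.log ((1 + η) * qx) :=
      Real.log_le_log hqhx hxu.le
    rw [Real.log_mul hp.ne' hqx0.ne'] at this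
    linarith only [this, hsq]
  have hrhs : Real.log ((1 + η) / (1 - η) ^ 2)
      = Real.log (1 + η) - 2 * Real.log (1 - η) := by
    rw [Real.log_div hp.ne' (by positivity), Real.log_pow]
    push_cast; ring
  rw [abs_le]
  constructor <;> rw [hrhs] <;> linarith only [hL1u, hL1l, hL2u, hL2l, hD, hlogpm]
end

section
/- Let n ∈ ℕ, a : Fin n → ℝ with a_i ≥ 0 for all i, w : Fin n → ℝ with w_i ≥ 0 and Σ_i w_i = 1, and let 0 < δ_n < δ < 1. Then Σ_i w_i·log(1+(1+δ_n)a_i) ≤ Σ_i w_i·log(1+a_i) + δ_n·(1 − Σ_i w_i/(1+a_i)) and Σ_i w_i·log(1+(1−δ_n)a_i) ≥ Σ_i w_i·log(1+a_i) + (log(1−δ)/δ)·δ_n·(1 − Σ_i w_i/(1+a_i)). -/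
open Real Finset

lemma log_chord_lower (δ : ℝ) (hδ0 : 0 < δ) (hδ : δ < 1) :
    ∀ x : ℝ, 0 ≤ x → x ≤ δ → (Real.log (1 - δ) / δ) * x ≤ Real.log (1 - x) := by
  intro x hx0 hxδ
  have hc := strictConcaveOn_log_Ioi.concaveOn
  have h1 : (1 : ℝ) ∈ Set.Ioi (0:ℝ) := by norm_num
  have h2 : (1 - δ) ∈ Set.Ioi (0:ℝ) := by simp [Set.mem_Ioi]; linarith
  have ht0 : 0 ≤ x / δ := div_nonneg hx0 hδ0.le
  have ht1 : 0 ≤ 1 - x / δ := by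
    have : x / δ ≤ 1 := (div_le_one hδ0).2 hxδ
    linarith
  have hsum : (1 - x / δ) + x / δ = 1 := by ring
  have := hc.2 h1 h2 ht1 ht0 hsum
  simp only [smul_eq_mul] at this
  have harg : (1 - x / δ) * 1 + x / δ * (1 - δ) = 1 - x := by
    field_simp
    ring
  rw [harg, Real.log_one] at this
  calc (Real.log (1 - δ) / δ) * x = (1 - x / δ) * 0 + x / δ * Real.log (1 - δ) := by
        ring
    _ ≤ Real.log (1 - x) := this

/-- Perturbation bounds for the log-likelihood component `f` under
multiplicative perturbations `t → (1±δ_n)t` of the Grimshaw parameter. -/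
theorem f_perturbation_bounds
    (n : ℕ) (a w : Fin n → ℝ)
    (ha : ∀ i, 0 ≤ a i) (hw : ∀ i, 0 ≤ w i)
    (hsum : ∑ i, w i = 1)
    (δn δ : ℝ) (hδn : 0 < δn) (hδnδ : δn < δ) (hδ : δ < 1) :
    (∑ i, w i * Real.log (1 + (1 + δn) * a i) ≤
      (∑ i, w i * Real.log (1 + a i)) + δn * (1 - ∑ i, w i / (1 + a i))) ∧
    (∑ i, w i * Real.log (1 + (1 - δn) * a i) ≥
      (∑ i, w i * Real.log (1 + a i)) +
        (Real.log (1 - δ) / δ) * δn * (1 - ∑ i, w i / (1 + a i))) := by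
  have hδ0 : 0 < δ := lt_trans hδn hδnδ
  -- basic facts per index
  have hpos : ∀ i, (0:ℝ) < 1 + a i := fun i => by have := ha i; linarith
  -- the key ratio x i = δn * a i / (1 + a i)
  set x : Fin n → ℝ := fun i => δn * (a i / (1 + a i)) with hx
  have hx0 : ∀ i, 0 ≤ x i := fun i =>
    mul_nonneg hδn.le (div_nonneg (ha i) (hpos i).le)
  have hxδ : ∀ i, x i < δ := by
    intro i
    have hr : a i / (1 + a i) ≤ 1 := by
      rw [div_le_one (hpos i)]; linarith
    calc x i ≤ δn * 1 := mul_le_mul_of_nonneg_left hr hδn.le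
      _ = δn := mul_one _
      _ < δ := hδnδ
  -- rewrite RHS extra terms as sums
  have hrw : (1 : ℝ) - ∑ i, w i / (1 + a i) = ∑ i, w i * (a i / (1 + a i)) := by
    have h1 : ∀ i, w i * (a i / (1 + a i)) = w i - w i / (1 + a i) := by
      intro i
      have hne := (hpos i).ne'
      field_simp
      ring
    simp_rw [h1, Finset.sum_sub_distrib, hsum]
  constructor
  · rw [hrw, Finset.mul_sum, ← Finset.sum_add_distrib]
    apply Finset.sum_le_sum
    intro i _
    have key : Real.log (1 + (1 + δn) * a i) ≤ Real.log (1 + a i) + x i := by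
      have hfac : 1 + (1 + δn) * a i = (1 + a i) * (1 + x i) := by
        have hne := (hpos i).ne'
        rw [hx]; field_simp; ring
      rw [hfac, Real.log_mul (ne_of_gt (hpos i)) (by nlinarith [hx0 i])]
      have := Real.log_le_sub_one_of_pos (show (0:ℝ) < 1 + x i by nlinarith [hx0 i])
      linarith
    calc w i * Real.log (1 + (1 + δn) * a i) ≤ w i * (Real.log (1 + a i) + x i) :=
          mul_le_mul_of_nonneg_left key (hw i)
      _ = w i * Real.log (1 + a i) + δn * (w i * (a i / (1 + a i))) := by
          rw [hx]; ring
  · rw [ge_iff_le, hrw, Finset.mul_sum, ← Finset.sum_add_distrib]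
    apply Finset.sum_le_sum
    intro i _
    have key : Real.log (1 + a i) + (Real.log (1 - δ) / δ) * x i ≤
        Real.log (1 + (1 - δn) * a i) := by
      have hfac : 1 + (1 - δn) * a i = (1 + a i) * (1 - x i) := by
        have hne := (hpos i).ne'
        rw [hx]; field_simp; ring
      rw [hfac, Real.log_mul (ne_of_gt (hpos i)) (by nlinarith [hxδ i])]
      have := log_chord_lower δ hδ0 hδ (x i) (hx0 i) (hxδ i).le
      linarith
    calc w i * Real.log (1 + a i) +
          Real.log (1 - δ) / δ * δn * (w i * (a i / (1 + a i)))
        = w i * (Real.log (1 + a i) + (Real.log (1 - δ) / δ) * x i) := by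
          rw [hx]; ring
      _ ≤ w i * Real.log (1 + (1 - δn) * a i) :=
          mul_le_mul_of_nonneg_left key (hw i)
end

section
/- Let ξ > 0, c > 0, and let α : [1,∞) → ℝ be measurable, integrable on compact subintervals, with α(t) → 0 as t → ∞. Define Q(u) = (1−u)^{−ξ} · c · exp(∫_1^{1/(1−u)} α(t)/t dt) for u ∈ (0,1). Then for every sequence τ_n ∈ (0,1) with τ_n → 1, (1−τ_n)^{−1} · ∫_{τ_n}^1 Q(τ_n)/Q(u) du → 1/(1+ξ) as n → ∞. -/
open MeasureTheory Real Filter Set Topology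

/-!
Substituting `u = 1 - (1 - τ) s` turns the normalized integral into
`∫₀¹ Q(τ) / Q(1 - (1 - τ) s) ds`, whose integrand is `s ^ ξ * exp (-∫_T^{T/s} α(t)/t dt)` with
`T = 1/(1 - τ)`. Once `|α| ≤ ε` on `[T, ∞)`, the exponent is at most `ε log (1/s)` in absolute
value, so the integrand lies between `s ^ (ξ + ε)` and `s ^ (ξ - ε)` and the integral between
`1/(ξ + ε + 1)` and `1/(ξ - ε + 1)`. Since `T → ∞` along `τ_n`, `ε` can be taken arbitrarily small.
-/

theorem IntervalIntegrable.div_id {f : ℝ → ℝ} {a b : ℝ} (hf : IntervalIntegrable f volume a b)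
    (h0 : (0 : ℝ) ∉ uIcc a b) : IntervalIntegrable (fun t => f t / t) volume a b := by
  simpa only [div_eq_mul_inv] using
    hf.mul_continuousOn (continuousOn_inv₀.mono fun t ht (h : t = 0) => h0 (h ▸ ht))

theorem continuousOn_primitive_Ioi {f : ℝ → ℝ} {μ : Measure ℝ} [NullSingletonClass μ] {a : ℝ}
    (hf : ∀ b, a ≤ b → IntervalIntegrable f μ a b) :
    ContinuousOn (fun x => ∫ t in a..x, f t ∂μ) (Ioi a) := by
  intro x hx
  have hax : a ≤ x + 1 := by linarith [mem_Ioi.1 hx]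
  have hnhds : uIcc a (x + 1) ∈ 𝓝 x := by
    rw [uIcc_of_le hax]
    exact Icc_mem_nhds hx (lt_add_one x)
  exact ((intervalIntegral.continuousOn_primitive_interval' (hf _ hax)
    left_mem_uIcc).continuousAt hnhds).continuousWithinAt

theorem abs_integral_div_le_mul_log {f : ℝ → ℝ} {ε x y : ℝ} (hx : 0 < x) (hxy : x ≤ y)
    (hf : ∀ t ∈ Ioc x y, |f t| ≤ ε) : |∫ t in x..y, f t / t| ≤ ε * log (y / x) := by
  have hpos : ∀ t ∈ uIcc x y, 0 < t := fun t ht => hx.trans_le (uIcc_of_le hxy ▸ ht).1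
  calc |∫ t in x..y, f t / t| ≤ ∫ t in x..y, ε * t⁻¹ := by
        rw [← Real.norm_eq_abs]
        refine intervalIntegral.norm_integral_le_of_norm_le hxy (ae_of_all _ fun t ht => ?_)
          ((continuousOn_const.mul (continuousOn_inv₀.mono
            fun t ht => (hpos t ht).ne')).intervalIntegrable (μ := volume))
        have ht0 : 0 < t := hx.trans ht.1
        rw [norm_div, Real.norm_of_nonneg ht0.le, div_eq_mul_inv]
        gcongr
        exact hf t ht
    _ = ε * log (y / x) := by
        rw [intervalIntegral.integral_const_mul, integral_inv_of_pos hx (hx.trans_le hxy)]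

theorem rpow_mul_exp_neg_mem_Icc {r p ε I : ℝ} (hr : 0 < r) (hI : |I| ≤ ε * log r⁻¹) :
    r ^ p * exp (-I) ∈ Icc (r ^ (p + ε)) (r ^ (p - ε)) := by
  have hsplit : ∀ q, r ^ (p + q) = r ^ p * exp (log r * q) := fun q => by
    rw [rpow_add hr, rpow_def_of_pos hr q]
  rw [log_inv] at hI
  obtain ⟨hlo, hhi⟩ := abs_le.1 hI
  rw [sub_eq_add_neg, hsplit, hsplit]
  exact ⟨by gcongr; linarith, by gcongr; linarith⟩

theorem integral_rpow_zero_one {p : ℝ} (hp : -1 < p) : ∫ s in (0 : ℝ)..1, s ^ p = 1 / (p + 1) := by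
  rw [integral_rpow (Or.inl hp), one_rpow, zero_rpow (by linarith)]
  ring

theorem integral_mem_Icc_of_mem_Icc_rpow {F : ℝ → ℝ} {a b : ℝ} (ha : -1 < a) (hb : -1 < b)
    (hF : ContinuousOn F (Ioo 0 1)) (hbound : ∀ s ∈ Ioo (0 : ℝ) 1, F s ∈ Icc (s ^ a) (s ^ b)) :
    ∫ s in (0 : ℝ)..1, F s ∈ Icc (1 / (a + 1)) (1 / (b + 1)) := by
  have hb_int : IntegrableOn (fun s : ℝ => s ^ b) (Ioo 0 1) :=
    (intervalIntegrable_iff_integrableOn_Ioo_of_le zero_le_one).1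
      (intervalIntegral.intervalIntegrable_rpow' hb)
  have hF_int : IntervalIntegrable F volume 0 1 := by
    refine (intervalIntegrable_iff_integrableOn_Ioo_of_le zero_le_one).2
      (hb_int.mono' (hF.aestronglyMeasurable measurableSet_Ioo) ?_)
    refine (ae_restrict_iff' measurableSet_Ioo).2 (ae_of_all _ fun s hs => ?_)
    rw [Real.norm_of_nonneg ((rpow_nonneg hs.1.le a).trans (hbound s hs).1)]
    exact (hbound s hs).2
  rw [← integral_rpow_zero_one ha, ← integral_rpow_zero_one hb]
  exact ⟨intervalIntegral.integral_mono_on_of_le_Ioo zero_le_one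
      (intervalIntegral.intervalIntegrable_rpow' ha) hF_int fun s hs => (hbound s hs).1,
    intervalIntegral.integral_mono_on_of_le_Ioo zero_le_one
      hF_int (intervalIntegral.intervalIntegrable_rpow' hb) fun s hs => (hbound s hs).2⟩

theorem tendsto_of_eventually_mem_Icc {ι κ β : Type*} [TopologicalSpace β] [LinearOrder β]
    [OrderTopology β] {l : Filter ι} {l' : Filter κ} [l'.NeBot] {g : ι → β} {lo hi : κ → β}
    {L : β} (hlo : Tendsto lo l' (𝓝 L)) (hhi : Tendsto hi l' (𝓝 L))
    (h : ∀ᶠ ε in l', ∀ᶠ n in l, g n ∈ Icc (lo ε) (hi ε)) : Tendsto g l (𝓝 L) := by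
  refine tendsto_order.2 ⟨fun a ha => ?_, fun b hb => ?_⟩
  · obtain ⟨ε, hε, hg⟩ := ((hlo.eventually (lt_mem_nhds ha)).and h).exists
    exact hg.mono fun n hn => hε.trans_le hn.1
  · obtain ⟨ε, hε, hg⟩ := ((hhi.eventually (gt_mem_nhds hb)).and h).exists
    exact hg.mono fun n hn => hn.2.trans_lt hε

theorem tendsto_one_div_one_sub_atTop {ι : Type*} {l : Filter ι} {τ : ι → ℝ}
    (hτ : ∀ᶠ n in l, τ n < 1) (hτ1 : Tendsto τ l (𝓝 1)) :
    Tendsto (fun n => 1 / (1 - τ n)) l atTop := by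
  have h0 : Tendsto (fun n => 1 - τ n) l (𝓝[>] 0) :=
    tendsto_nhdsWithin_iff.2 ⟨by simpa using (tendsto_const_nhds (x := (1:ℝ))).sub hτ1,
      hτ.mono fun n hn => sub_pos.2 hn⟩
  simp only [one_div]
  exact tendsto_inv_nhdsGT_zero.comp h0

theorem one_sub_mul_mem_Ioo {τ s : ℝ} (hτ : τ ∈ Ioo 0 1) (hs : s ∈ Ioo 0 1) :
    1 - (1 - τ) * s ∈ Ioo 0 1 :=
  ⟨by nlinarith [hs.1, hs.2, hτ.1, hτ.2], by nlinarith [hs.1, hτ.2]⟩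

def IsKaramataQuantile (ξ c : ℝ) (α Q : ℝ → ℝ) : Prop :=
  ∀ u ∈ Ioo (0:ℝ) 1, Q u = (1 - u) ^ (-ξ) * c * exp (∫ t in (1:ℝ)..(1 / (1 - u)), α t / t)

section Karamata

variable {ξ c : ℝ} {α Q : ℝ → ℝ}

theorem intervalIntegrable_div_of_one_le
    (hint : ∀ a b : ℝ, 1 ≤ a → IntervalIntegrable α volume a b) {a b : ℝ}
    (ha : 1 ≤ a) (hb : 1 ≤ b) : IntervalIntegrable (fun t => α t / t) volume a b :=
  (hint a b ha).div_id fun h0 => by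
    have := (le_min ha hb).trans h0.1
    linarith

theorem continuousOn_karamataQuantile
    (hint : ∀ a b : ℝ, 1 ≤ a → IntervalIntegrable α volume a b)
    (hQ : IsKaramataQuantile ξ c α Q) :
    ContinuousOn Q (Ioo 0 1) := by
  have h1u : ∀ u ∈ Ioo (0:ℝ) 1, 1 - u ≠ 0 := fun u hu => (sub_pos.2 hu.2).ne'
  have hprim : ContinuousOn (fun x => ∫ t in (1:ℝ)..x, α t / t) (Ioi 1) :=
    continuousOn_primitive_Ioi fun b hb => intervalIntegrable_div_of_one_le hint le_rfl hb
  refine ContinuousOn.congr ?_ hQ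
  refine ((continuousOn_const.sub continuousOn_id).rpow_const fun u hu => Or.inl (h1u u hu)).mul
    continuousOn_const |>.mul (continuous_exp.comp_continuousOn (hprim.comp ?_ ?_))
  · exact continuousOn_const.div (continuousOn_const.sub continuousOn_id) h1u
  · exact fun u hu => one_lt_one_div (sub_pos.2 hu.2) (by linarith [hu.1])

theorem karamataQuantile_ne_zero (hc : c ≠ 0)
    (hQ : IsKaramataQuantile ξ c α Q)
    {u : ℝ} (hu : u ∈ Ioo 0 1) : Q u ≠ 0 := by
  rw [hQ u hu]
  have := rpow_pos_of_pos (sub_pos.2 hu.2) (-ξ)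
  positivity

theorem karamataQuantile_div_eq
    (hc : c ≠ 0) (hint : ∀ a b : ℝ, 1 ≤ a → IntervalIntegrable α volume a b)
    (hQ : IsKaramataQuantile ξ c α Q)
    {τ s : ℝ} (hτ : τ ∈ Ioo 0 1) (hs : s ∈ Ioo 0 1) :
    Q τ / Q (1 - (1 - τ) * s) =
      s ^ ξ * exp (-∫ t in 1 / (1 - τ)..1 / ((1 - τ) * s), α t / t) := by
  have h1τ : 0 < 1 - τ := sub_pos.2 hτ.2
  have hT : 1 ≤ 1 / (1 - τ) := one_le_one_div h1τ (by linarith [hτ.1])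
  have hTs : 1 ≤ 1 / ((1 - τ) * s) :=
    one_le_one_div (mul_pos h1τ hs.1) (by nlinarith [hs.2, hτ.1])
  rw [hQ τ hτ, hQ _ (one_sub_mul_mem_Ioo hτ hs), sub_sub_cancel,
    ← intervalIntegral.integral_add_adjacent_intervals
      (intervalIntegrable_div_of_one_le hint le_rfl hT)
      (intervalIntegrable_div_of_one_le hint hT hTs), exp_add, exp_neg,
    mul_rpow h1τ.le hs.1.le, rpow_neg h1τ.le, rpow_neg hs.1.le]
  have := rpow_pos_of_pos h1τ ξ
  have := rpow_pos_of_pos hs.1 ξ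
  field_simp

theorem karamataQuantile_div_mem_Icc
    (hc : c ≠ 0) (hint : ∀ a b : ℝ, 1 ≤ a → IntervalIntegrable α volume a b)
    (hQ : IsKaramataQuantile ξ c α Q)
    {τ ε s : ℝ} (hτ : τ ∈ Ioo 0 1) (hαε : ∀ t, 1 / (1 - τ) ≤ t → |α t| ≤ ε)
    (hs : s ∈ Ioo 0 1) :
    Q τ / Q (1 - (1 - τ) * s) ∈ Icc (s ^ (ξ + ε)) (s ^ (ξ - ε)) := by
  have h1τ : 0 < 1 - τ := sub_pos.2 hτ.2
  have hTs : 1 / (1 - τ) ≤ 1 / ((1 - τ) * s) :=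
    one_div_le_one_div_of_le (mul_pos h1τ hs.1) (mul_le_of_le_one_right h1τ.le hs.2.le)
  have hlog : 1 / ((1 - τ) * s) / (1 / (1 - τ)) = s⁻¹ := by
    field_simp
  rw [karamataQuantile_div_eq hc hint hQ hτ hs]
  refine rpow_mul_exp_neg_mem_Icc hs.1 ?_
  rw [← hlog]
  exact abs_integral_div_le_mul_log (by positivity) hTs fun t ht => hαε t ht.1.le

theorem inv_one_sub_mul_integral_karamataQuantile_div_mem_Icc
    (hc : c ≠ 0) (hint : ∀ a b : ℝ, 1 ≤ a → IntervalIntegrable α volume a b)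
    (hQ : IsKaramataQuantile ξ c α Q)
    {τ ε : ℝ} (hτ : τ ∈ Ioo 0 1) (hαε : ∀ t, 1 / (1 - τ) ≤ t → |α t| ≤ ε)
    (hξε : -1 < ξ - ε) :
    (1 - τ)⁻¹ * ∫ u in τ..1, Q τ / Q u ∈ Icc (1 / (ξ + ε + 1)) (1 / (ξ - ε + 1)) := by
  have h1τ : 0 < 1 - τ := sub_pos.2 hτ.2
  have hε : 0 ≤ ε := (abs_nonneg _).trans (hαε _ le_rfl)
  have hsubst : (1 - τ)⁻¹ * ∫ u in τ..1, Q τ / Q u =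
      ∫ s in (0:ℝ)..1, Q τ / Q (1 - (1 - τ) * s) := by
    rw [intervalIntegral.integral_comp_sub_mul (fun u => Q τ / Q u) h1τ.ne', smul_eq_mul]
    norm_num
  have hmaps : MapsTo (fun s => 1 - (1 - τ) * s) (Ioo 0 1) (Ioo 0 1) := fun _ hs =>
    one_sub_mul_mem_Ioo hτ hs
  have hcont : ContinuousOn (fun s => Q τ / Q (1 - (1 - τ) * s)) (Ioo 0 1) :=
    continuousOn_const.div ((continuousOn_karamataQuantile hint hQ).comp (by fun_prop) hmaps)
      fun s hs => karamataQuantile_ne_zero hc hQ (hmaps hs)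
  rw [hsubst]
  exact integral_mem_Icc_of_mem_Icc_rpow (by linarith) hξε hcont
    fun s hs => karamataQuantile_div_mem_Icc hc hint hQ hτ hαε hs

end Karamata

theorem g_population_limit_general
    (ξ c : ℝ) (hξ : 0 < ξ) (hc : 0 < c)
    (α : ℝ → ℝ)
    (hint : ∀ a b : ℝ, 1 ≤ a → IntervalIntegrable α volume a b)
    (hα : Filter.Tendsto α Filter.atTop (nhds 0))
    (Q : ℝ → ℝ)
    (hQ : ∀ u ∈ Set.Ioo (0:ℝ) 1,
      Q u = (1 - u) ^ (-ξ) * c *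
        Real.exp (∫ t in (1:ℝ)..(1 / (1 - u)), α t / t))
    (τ : ℕ → ℝ) (hτ : ∀ n, τ n ∈ Set.Ioo (0:ℝ) 1)
    (hτ1 : Filter.Tendsto τ Filter.atTop (nhds 1)) :
    Filter.Tendsto
      (fun n => (1 - τ n)⁻¹ * ∫ u in (τ n)..1, Q (τ n) / Q u)
      Filter.atTop (nhds (1 / (1 + ξ))) := by
  have hT : Tendsto (fun n => 1 / (1 - τ n)) atTop atTop :=
    tendsto_one_div_one_sub_atTop (Eventually.of_forall fun n => (hτ n).2) hτ1
  have hlim : ∀ σ : ℝ, Tendsto (fun ε => 1 / (ξ + σ * ε + 1)) (𝓝[>] 0) (𝓝 (1 / (1 + ξ))) := by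
    intro σ
    refine tendsto_nhdsWithin_of_tendsto_nhds ?_
    have : ContinuousAt (fun ε => 1 / (ξ + σ * ε + 1)) 0 := by
      fun_prop (disch := simp; linarith)
    simpa [add_comm] using this.tendsto
  refine tendsto_of_eventually_mem_Icc (hlim 1) (hlim (-1)) ?_
  filter_upwards [Ioo_mem_nhdsGT hξ] with ε hε
  have hαε : ∀ᶠ x in atTop, ∀ t ≥ x, |α t| ≤ ε := eventually_forall_ge_atTop.2 <| by
    simpa using hα.abs.eventually (ge_mem_nhds (by simpa using hε.1))
  filter_upwards [hT.eventually hαε] with n hn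
  simpa [← sub_eq_add_neg] using inv_one_sub_mul_integral_karamataQuantile_div_mem_Icc
    hc.ne' hint hQ (hτ n) hn (by linarith [hε.2])

/-- Population version of the localized statistic `g` at the approximate
Grimshaw solution: `(1−τ_n)⁻¹ ∫_{τ_n}^1 Q(τ_n)/Q(u) du → 1/(1+ξ)` for a
heavy-tailed Karamata quantile function with extreme value index `ξ > 0`. -/
theorem g_population_limit
    (ξ c : ℝ) (hξ : 0 < ξ) (hc : 0 < c)
    (α : ℝ → ℝ) (hmeas : Measurable α)
    (hint : ∀ a b : ℝ, 1 ≤ a → IntervalIntegrable α volume a b)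
    (hα : Filter.Tendsto α Filter.atTop (nhds 0))
    (Q : ℝ → ℝ)
    (hQ : ∀ u ∈ Set.Ioo (0:ℝ) 1,
      Q u = (1 - u) ^ (-ξ) * c *
        Real.exp (∫ t in (1:ℝ)..(1 / (1 - u)), α t / t))
    (τ : ℕ → ℝ) (hτ : ∀ n, τ n ∈ Set.Ioo (0:ℝ) 1)
    (hτ1 : Filter.Tendsto τ Filter.atTop (nhds 1)) :
    Filter.Tendsto
      (fun n => (1 - τ n)⁻¹ * ∫ u in (τ n)..1, Q (τ n) / Q u)
      Filter.atTop (nhds (1 / (1 + ξ))) :=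
  g_population_limit_general ξ c hξ hc α hint hα Q hQ τ hτ hτ1
end
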